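/- Let γ1, γ2, b > 0, ζ > 0 and kc ∈ ℝ. The matrix A(ζ) = [[−γ1 − b·ζ, 0, kc], [b·ζ/2, −γ2, 0], [0, −1, 0]] is Hurwitz (all eigenvalues have negative real part) if and only if 0 < kc < 2γ2·(γ1 + γ2 + b·ζ)·(γ1 + b·ζ)/(b·ζ). -/

import Mathlib

/-- A real square matrix is Hurwitz if all of its eigenvalues over `ℂ` have
negative real part. -/
def IsHurwitz {n : ℕ} (A : Matrix (Fin n) (Fin n) ℝ) : Prop :=
  ∀ μ ∈ spectrum ℂ (A.map Complex.ofReal), μ.re < 0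

/-!
The characteristic polynomial of `A(ζ)` is `μ³ + a₂μ² + a₁μ + a₀` with `a₂ = γ₁ + bζ + γ₂`,
`a₁ = (γ₁ + bζ)γ₂` and `a₀ = kc·bζ/2`, so the claim is the Routh–Hurwitz criterion
`0 < a₀ < a₂a₁` for a real cubic with `a₂, a₁ ≥ 0`. A non-real root `x + iy` is characterised by
`y² = 3x² + 2a₂x + a₁` together with `g(x) = 0`, where
`g(x) = 8x³ + 8a₂x² + 2(a₁ + a₂²)x + (a₂a₁ - a₀)`. On `[0, ∞)` both the cubic and `g` are at
least their value at `0` and tend to `∞`, so a root with `x ≥ 0` exists exactly when `a₀ ≤ 0`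
(a real one) or `a₂a₁ ≤ a₀` (a non-real one).
-/

open Polynomial Complex

theorem exists_nonneg_cubic_root {c b a d : ℝ} (hc : 0 < c) (hd : d ≤ 0) :
    ∃ x, 0 ≤ x ∧ c * x ^ 3 + b * x ^ 2 + a * x + d = 0 := by
  set P : ℝ[X] := C c * X ^ 3 + C b * X ^ 2 + C a * X + C d
  have hdeg : P.natDegree = 3 := by unfold P; compute_degree!; exact hc.ne'
  have hlead : P.leadingCoeff = c := by rw [leadingCoeff, hdeg]; simp [P]
  have htop := P.tendsto_atTop_of_leadingCoeff_nonneg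
    (natDegree_pos_iff_degree_pos.1 (by omega)) (hlead ▸ hc.le)
  obtain ⟨x, hx, hPx⟩ := intermediate_value_Ici P.continuous.continuousOn htop
    (show (0 : ℝ) ∈ Set.Ici (P.eval 0) by simpa [P] using hd)
  exact ⟨x, hx, by simpa [P] using hPx⟩

section RouthHurwitz

variable {a₂ a₁ a₀ : ℝ}

theorem cubic_re_im_eq_zero {μ : ℂ} (h : μ ^ 3 + a₂ * μ ^ 2 + a₁ * μ + a₀ = 0) :
    μ.re ^ 3 - 3 * μ.re * μ.im ^ 2 + a₂ * (μ.re ^ 2 - μ.im ^ 2) + a₁ * μ.re + a₀ = 0 ∧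
      μ.im * (3 * μ.re ^ 2 - μ.im ^ 2 + 2 * a₂ * μ.re + a₁) = 0 := by
  have hre := congrArg re h
  have him := congrArg im h
  simp only [pow_succ, pow_zero, one_mul, add_re, add_im, mul_re, mul_im, ofReal_re, ofReal_im,
    zero_re, zero_im] at hre him
  exact ⟨by linear_combination hre, by linear_combination him⟩

theorem cubic_eq_zero_of_im_sq {x y : ℝ} (hy : y ^ 2 = 3 * x ^ 2 + 2 * a₂ * x + a₁)
    (hx : 8 * x ^ 3 + 8 * a₂ * x ^ 2 + 2 * (a₁ + a₂ ^ 2) * x + (a₂ * a₁ - a₀) = 0) :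
    (x + y * I) ^ 3 + a₂ * (x + y * I) ^ 2 + a₁ * (x + y * I) + a₀ = 0 := by
  have hy' : (y : ℂ) ^ 2 = 3 * x ^ 2 + 2 * a₂ * x + a₁ := by exact_mod_cast congrArg ofReal hy
  have hx' : (8 : ℂ) * x ^ 3 + 8 * a₂ * x ^ 2 + 2 * (a₁ + a₂ ^ 2) * x + (a₂ * a₁ - a₀) = 0 := by
    exact_mod_cast congrArg ofReal hx
  linear_combination (-3 * x - a₂ - y * I) * hy' - hx' +
    (3 * x * y ^ 2 + a₂ * y ^ 2 + I * y ^ 3) * I_sq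

theorem re_neg_of_cubic_eq_zero (h₂ : 0 ≤ a₂) (h₁ : 0 ≤ a₁) (h₀ : 0 < a₀) (h : a₀ < a₂ * a₁)
    {μ : ℂ} (hμ : μ ^ 3 + a₂ * μ ^ 2 + a₁ * μ + a₀ = 0) : μ.re < 0 := by
  obtain ⟨hre, him⟩ := cubic_re_im_eq_zero hμ
  by_contra! hx
  rcases mul_eq_zero.1 him with hy | hy
  · rw [hy] at hre
    nlinarith [pow_nonneg hx 3, mul_nonneg h₂ (sq_nonneg μ.re), mul_nonneg h₁ hx]
  · have hy2 : μ.im ^ 2 = 3 * μ.re ^ 2 + 2 * a₂ * μ.re + a₁ := by linarith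
    have hg : 8 * μ.re ^ 3 + 8 * a₂ * μ.re ^ 2 + 2 * (a₁ + a₂ ^ 2) * μ.re + (a₂ * a₁ - a₀) = 0 := by
      linear_combination -hre - (3 * μ.re + a₂) * hy2
    nlinarith [pow_nonneg hx 3, mul_nonneg h₂ (sq_nonneg μ.re),
      mul_nonneg (add_nonneg h₁ (sq_nonneg a₂)) hx]

theorem exists_cubic_eq_zero_re_nonneg_of_nonpos (h₀ : a₀ ≤ 0) :
    ∃ μ : ℂ, μ ^ 3 + a₂ * μ ^ 2 + a₁ * μ + a₀ = 0 ∧ 0 ≤ μ.re := by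
  obtain ⟨x, hx, hroot⟩ := exists_nonneg_cubic_root (b := a₂) (a := a₁) one_pos h₀
  exact ⟨x, by exact_mod_cast congrArg ofReal (by simpa using hroot), by simpa using hx⟩

theorem exists_cubic_eq_zero_re_nonneg_of_le (h₂ : 0 ≤ a₂) (h₁ : 0 ≤ a₁) (h : a₂ * a₁ ≤ a₀) :
    ∃ μ : ℂ, μ ^ 3 + a₂ * μ ^ 2 + a₁ * μ + a₀ = 0 ∧ 0 ≤ μ.re := by
  obtain ⟨x, hx, hg⟩ := exists_nonneg_cubic_root (c := 8) (b := 8 * a₂) (a := 2 * (a₁ + a₂ ^ 2))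
    (by norm_num) (sub_nonpos.2 h)
  have hy := Real.sq_sqrt (show 0 ≤ 3 * x ^ 2 + 2 * a₂ * x + a₁ by positivity)
  exact ⟨_, cubic_eq_zero_of_im_sq hy (by linear_combination hg), by simpa using hx⟩

theorem forall_cubic_eq_zero_re_neg_iff (h₂ : 0 ≤ a₂) (h₁ : 0 ≤ a₁) :
    (∀ μ : ℂ, μ ^ 3 + a₂ * μ ^ 2 + a₁ * μ + a₀ = 0 → μ.re < 0) ↔ 0 < a₀ ∧ a₀ < a₂ * a₁ := by
  refine ⟨fun hneg => ⟨?_, ?_⟩, fun ⟨h₀, h⟩ _ => re_neg_of_cubic_eq_zero h₂ h₁ h₀ h⟩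
  · by_contra! h₀
    obtain ⟨μ, hμ, hre⟩ := exists_cubic_eq_zero_re_nonneg_of_nonpos h₀
    exact (hneg μ hμ).not_ge hre
  · by_contra! h
    obtain ⟨μ, hμ, hre⟩ := exists_cubic_eq_zero_re_nonneg_of_le h₂ h₁ h
    exact (hneg μ hμ).not_ge hre

end RouthHurwitz

theorem mem_spectrum_map_ofReal_iff {p q r k : ℝ} (μ : ℂ) :
    μ ∈ spectrum ℂ ((!![-p, 0, k; q, -r, 0; 0, -1, 0] : Matrix (Fin 3) (Fin 3) ℝ).map ofReal) ↔
      μ ^ 3 + (p + r : ℝ) * μ ^ 2 + (p * r : ℝ) * μ + (k * q : ℝ) = 0 := by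
  rw [Matrix.mem_spectrum_iff_isRoot_charpoly, IsRoot.def, Matrix.eval_charpoly,
    Matrix.det_fin_three]
  congr! 1
  simp [Matrix.scalar_apply]
  ring

theorem stmt16 (γ1 γ2 b ζ kc : ℝ) (hγ1 : 0 < γ1) (hγ2 : 0 < γ2) (hb : 0 < b)
    (hζ : 0 < ζ) :
    IsHurwitz !![-γ1 - b * ζ, 0, kc; b * ζ / 2, -γ2, 0; 0, -1, 0] ↔
      (0 < kc ∧ kc < 2 * γ2 * (γ1 + γ2 + b * ζ) * (γ1 + b * ζ) / (b * ζ)) := by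
  have hbζ : 0 < b * ζ := mul_pos hb hζ
  rw [show -γ1 - b * ζ = -(γ1 + b * ζ) by ring, IsHurwitz]
  simp_rw [mem_spectrum_map_ofReal_iff]
  rw [forall_cubic_eq_zero_re_neg_iff (by positivity) (by positivity), lt_div_iff₀ hbζ]
  exact and_congr (mul_pos_iff_of_pos_right (by positivity))
    ⟨fun h => by linarith, fun h => by linarith⟩
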